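/- Let R be a commutative ring with 1 and let k ≥ 1 be an integer. For 1 ≤ i ≤ k−1 let A_i ∈ M_k(R) be the matrix determined on the standard basis vectors e_1, …, e_k by: A_i e_j = e_j for j < i; A_i e_i = e_k; and A_i e_j = −e_{j−1} for i < j ≤ k. Let J ∈ M_k(R) be the antidiagonal matrix with entries J_{k+1−j, j} = (−1)^{j−1} for 1 ≤ j ≤ k and all other entries 0. Then the product A_1 · A_2 · ⋯ · A_{k−1} equals J (for k = 1 the empty product is the identity matrix, which equals J). -/

import Mathlib

/-!
Every `A_i` sends each basis vector to a signed basis vector, so the partial products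
`A_1 ⋯ A_m` can be tracked column by column: induction on `m` shows that `A_1 ⋯ A_m` sends
`e_j ↦ (-1)^j e_{k-1-j}` for `j < m` and `e_j ↦ (-1)^m e_{j-m}` for `j ≥ m` (indices from `0`).
For `m = k - 1` only the first rule matters, and it describes `J`.
-/

open Matrix

theorem Matrix.mul_apply_of_col_eq_single {n R : Type*} [Fintype n] [DecidableEq n]
    [NonUnitalNonAssocSemiring R] (M B : Matrix n n R) (a j b : n) (s : R)
    (hB : ∀ c, B c j = if c = b then s else 0) :
    (M * B) a j = M a b * s := by
  simp [mul_apply, hB]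

namespace WeylRepresentative

variable {R : Type*} [CommRing R] {k : ℕ}

variable (R k) in
/-- The paper's `A_i`: `i` counts from `1`, matrix indices from `0`. -/
def weylFactor (i : ℕ) : Matrix (Fin k) (Fin k) R :=
  of fun a j =>
    if (j : ℕ) + 1 < i then (if a = j then 1 else 0)
    else if (j : ℕ) + 1 = i then (if (a : ℕ) = k - 1 then 1 else 0)
    else (if (a : ℕ) + 1 = (j : ℕ) then -1 else 0)

variable (R k) in
def signedAntidiag : Matrix (Fin k) (Fin k) R :=
  of fun a j => if (a : ℕ) = k - 1 - (j : ℕ) then (-1 : R) ^ (j : ℕ) else 0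

variable (R k) in
def partialProd (m : ℕ) : Matrix (Fin k) (Fin k) R :=
  of fun a j =>
    if (j : ℕ) < m then (if (a : ℕ) + (j : ℕ) = k - 1 then (-1 : R) ^ (j : ℕ) else 0)
    else (if (a : ℕ) + m = (j : ℕ) then (-1 : R) ^ m else 0)

theorem partialProd_zero : partialProd R k 0 = 1 := by
  ext a j
  simp [partialProd, one_apply, Fin.ext_iff]

theorem partialProd_mul_weylFactor (m : ℕ) :
    partialProd R k m * weylFactor R k (m + 1) = partialProd R k (m + 1) := by
  ext a j
  have hj := j.isLt
  rcases lt_trichotomy (j : ℕ) m with hjm | rfl | hmj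
  · rw [mul_apply_of_col_eq_single _ _ a j j 1 fun c => by simp [weylFactor, hjm]]
    simp only [partialProd, of_apply]
    split_ifs <;> first | omega | simp
  · rw [mul_apply_of_col_eq_single _ _ a j ⟨k - 1, by omega⟩ 1 fun c => by
      simp [weylFactor, Fin.ext_iff]]
    simp only [partialProd, of_apply]
    split_ifs <;> first | omega | simp
  · rw [mul_apply_of_col_eq_single _ _ a j ⟨(j : ℕ) - 1, by omega⟩ (-1) fun c => by
      simp only [weylFactor, of_apply, Fin.ext_iff]
      split_ifs <;> first | rfl | omega]
    simp only [partialProd, of_apply]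
    split_ifs <;> first | omega | simp [pow_succ]

theorem prod_weylFactor (m : ℕ) :
    ((List.range m).map fun i => weylFactor R k (i + 1)).prod = partialProd R k m := by
  induction m with
  | zero => exact partialProd_zero.symm
  | succ m ih => simp [List.range_succ, ih, partialProd_mul_weylFactor]

theorem partialProd_sub_one : partialProd R k (k - 1) = signedAntidiag R k := by
  ext a j
  simp only [partialProd, signedAntidiag, of_apply]
  split_ifs <;> first | omega | grind

end WeylRepresentative

open WeylRepresentative in
theorem weyl_representative_matrix_product_general
    (R : Type*) [CommRing R] (k : ℕ)
    (A : ℕ → Matrix (Fin k) (Fin k) R)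
    (hA : ∀ i : ℕ, 1 ≤ i → i ≤ k - 1 → ∀ a j : Fin k,
      A i a j =
        if (j : ℕ) + 1 < i then (if a = j then 1 else 0)
        else if (j : ℕ) + 1 = i then (if (a : ℕ) = k - 1 then 1 else 0)
        else (if (a : ℕ) + 1 = (j : ℕ) then -1 else 0))
    (J : Matrix (Fin k) (Fin k) R)
    (hJ : ∀ a j : Fin k,
      J a j = if (a : ℕ) = k - 1 - (j : ℕ) then (-1 : R) ^ (j : ℕ) else 0) :
    ((List.range (k - 1)).map fun i => A (i + 1)).prod = J := by
  have hA' : ((List.range (k - 1)).map fun i => A (i + 1)) =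
      (List.range (k - 1)).map fun i => weylFactor R k (i + 1) :=
    List.map_congr_left fun i hi => ext <| hA (i + 1) (by omega) (by simp at hi; omega)
  rw [hA', prod_weylFactor, partialProd_sub_one]
  exact ext fun a j => (hJ a j).symm

/-- Let `R` be a commutative ring and `k ≥ 1`.  For `1 ≤ i ≤ k-1` let
`A_i ∈ M_k(R)` be the matrix acting on the standard basis (`1`-based indexing) by
`A_i e_j = e_j` for `j < i`, `A_i e_i = e_k`, and `A_i e_j = -e_{j-1}` for `i < j ≤ k`.
Let `J` be the antidiagonal matrix with `J_{k+1-j, j} = (-1)^{j-1}`.  Then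
`A_1 ⋯ A_{k-1} = J` (the empty product for `k = 1` being the identity, which equals `J`).

Here indices are encoded by `Fin k` (so `1`-based index `j` corresponds to `(j : Fin k)`
with `(j : ℕ) + 1 = j`). -/
theorem weyl_representative_matrix_product
    (R : Type*) [CommRing R] (k : ℕ) (hk : 1 ≤ k)
    (A : ℕ → Matrix (Fin k) (Fin k) R)
    (hA : ∀ i : ℕ, 1 ≤ i → i ≤ k - 1 → ∀ a j : Fin k,
      A i a j =
        if (j : ℕ) + 1 < i then (if a = j then 1 else 0)
        else if (j : ℕ) + 1 = i then (if (a : ℕ) = k - 1 then 1 else 0)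
        else (if (a : ℕ) + 1 = (j : ℕ) then -1 else 0))
    (J : Matrix (Fin k) (Fin k) R)
    (hJ : ∀ a j : Fin k,
      J a j = if (a : ℕ) = k - 1 - (j : ℕ) then (-1 : R) ^ (j : ℕ) else 0) :
    ((List.range (k - 1)).map fun i => A (i + 1)).prod = J :=
  weyl_representative_matrix_product_general R k A hA J hJ
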